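/- Let A be a multiring. Then A is a real reduced multiring such that for every a ∈ A there exists x ∈ A with ax = 0 and x ∈ 1+(-a²), if and only if A is a hyperring that is a real reduced multiring. -/

import Mathlib

universe u v

/-- A multiring: a commutative monoid with a multivalued addition. -/
class Multiring (A : Type u) extends CommMonoid A, Zero A, Neg A where
  /-- the multivalued sum: `madd b c` is the set `b + c` -/
  madd : A → A → Set A
  madd_nonempty : ∀ a b : A, (madd a b).Nonempty
  madd_rev_left : ∀ a b c : A, a ∈ madd b c → c ∈ madd (-b) a
  madd_rev_right : ∀ a b c : A, a ∈ madd b c → b ∈ madd a (-c)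
  mem_madd_zero : ∀ a b : A, a ∈ madd b 0 ↔ a = b
  madd_assoc : ∀ a b c g x : A, g ∈ madd a b → x ∈ madd g c →
    ∃ h ∈ madd b c, x ∈ madd a h
  madd_comm : ∀ a b : A, madd a b = madd b a
  mul_zero' : ∀ a : A, a * 0 = 0
  madd_mul : ∀ a b c d : A, a ∈ madd b c → a * d ∈ madd (b * d) (c * d)

namespace Multiring

variable {A : Type u} [Multiring A]

/-- the iterated multivalued sum `x₁ + ⋯ + xₙ = {x₁} + (x₂ + ⋯ + xₙ)` of a list -/
def listSum : List A → Set A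
  | [] => {(0 : A)}
  | a :: l => {x : A | ∃ y ∈ listSum l, x ∈ madd a y}

/-- an ideal of a multiring: a nonempty subset with `I + I ⊆ I` and `A·I ⊆ I` -/
def IsIdeal (I : Set A) : Prop :=
  I.Nonempty ∧ (∀ a ∈ I, ∀ b ∈ I, madd a b ⊆ I) ∧ ∀ a : A, ∀ b ∈ I, a * b ∈ I

/-- a prime ideal: a proper ideal such that `a*b ∈ p → a ∈ p ∨ b ∈ p` -/
def IsPrimeIdeal (I : Set A) : Prop :=
  IsIdeal I ∧ (1 : A) ∉ I ∧ ∀ a b : A, a * b ∈ I → a ∈ I ∨ b ∈ I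

/-- a maximal ideal: a proper ideal maximal among proper ideals -/
def IsMaximalIdeal (I : Set A) : Prop :=
  IsIdeal I ∧ (1 : A) ∉ I ∧ ∀ J : Set A, IsIdeal J → (1 : A) ∉ J → I ⊆ J → J = I

/-- a multiplicative subset -/
def IsMultiplicative (S : Set A) : Prop :=
  (1 : A) ∈ S ∧ ∀ s ∈ S, ∀ t ∈ S, s * t ∈ S

/-- a hyperring: a multiring with the strong distributivity property -/
def IsHyperring (A : Type u) [Multiring A] : Prop :=
  ∀ x b c d : A, x ∈ madd (b * d) (c * d) → ∃ a ∈ madd b c, x = a * d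

/-- a von Neumann (regular) hyperring -/
def IsVonNeumann (A : Type u) [Multiring A] : Prop :=
  IsHyperring A ∧ ∀ a : A, ∃ b : A, a = a * a * b

/-- the equivalence modulo an ideal `I`: `a ∼_I b` iff `(a + (-b)) ∩ I ≠ ∅`;
this is equality of classes in the quotient multiring `A/I`. -/
def simI (I : Set A) (a b : A) : Prop := ∃ x ∈ madd a (-b), x ∈ I

/-- membership of classes in the multivalued sum of the quotient `A/I`:
`[a] ∈ [b] + [c]` iff `a ∈ b + c + i` for some `i ∈ I`. -/
def qmemI (I : Set A) (a b c : A) : Prop := ∃ i ∈ I, ∃ w ∈ madd c i, a ∈ madd b w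

/-- representatives `x` with `[x] ∈ [c₁] + ⋯ + [cₙ]` in the quotient `A/I` -/
def qlistSumI (I : Set A) : List A → Set A
  | [] => {x : A | simI I x 0}
  | c :: l => {x : A | ∃ y ∈ qlistSumI I l, qmemI I x c y}

/-- the quotient multiring `A/I` is a multifield: `1 ≠ 0` and every nonzero
element is weak-invertible -/
def QuotIsMultifield (I : Set A) : Prop :=
  ¬ simI I 1 0 ∧
    ∀ a : A, ¬ simI I a 0 →
      ∃ l : List A, l ≠ [] ∧ (1 : A) ∈ qlistSumI I (l.map fun b => a * b)

/-- the quotient multiring `A/I` is a hyperfield: `1 ≠ 0` and every nonzero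
element is invertible -/
def QuotIsHyperfield (I : Set A) : Prop :=
  ¬ simI I 1 0 ∧ ∀ a : A, ¬ simI I a 0 → ∃ b : A, simI I (a * b) 1

/-- the Marshall equivalence associated to a multiplicative set `S`:
`a ∼_S b` iff `as = bt` for some `s,t ∈ S`; this is equality of classes in the
Marshall quotient `A/ₘS`. -/
def simM (S : Set A) (a b : A) : Prop := ∃ s ∈ S, ∃ t ∈ S, a * s = b * t

/-- `S̄ = {x : xs ∈ S for some s ∈ S}` -/
def mbar (S : Set A) : Set A := {x : A | ∃ s ∈ S, x * s ∈ S}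

/-- membership of classes in the multivalued sum of the Marshall quotient `A/ₘS`:
`[a] ∈ [b] + [c]` iff `as ∈ bt + cu` for some `s,t,u ∈ S`. -/
def qmemM (S : Set A) (a b c : A) : Prop :=
  ∃ s ∈ S, ∃ t ∈ S, ∃ u ∈ S, a * s ∈ madd (b * t) (c * u)

/-- representatives `x` with `[x] ∈ [c₁] + ⋯ + [cₙ]` in the Marshall quotient `A/ₘS` -/
def qlistSumM (S : Set A) : List A → Set A
  | [] => {x : A | simM S x 0}
  | c :: l => {x : A | ∃ y ∈ qlistSumM S l, qmemM S x c y}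

/-- the multivalued sum of the hyperfield `3 = {-1, 0, 1}` -/
def signAdd : SignType → SignType → Set SignType
  | SignType.zero, x => {x}
  | x, SignType.zero => {x}
  | SignType.pos, SignType.pos => {SignType.pos}
  | SignType.neg, SignType.neg => {SignType.neg}
  | _, _ => Set.univ

/-- a multiring morphism `A → 3`, i.e. an order of `A` -/
def IsSignMorphism (σ : A → SignType) : Prop :=
  (∀ a b c : A, a ∈ madd b c → σ a ∈ signAdd (σ b) (σ c)) ∧
  (∀ a b : A, σ (a * b) = σ a * σ b) ∧
  (∀ a : A, σ (-a) = -(σ a)) ∧ σ 0 = 0 ∧ σ 1 = 1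

/-- a prime cone of a multiring -/
def IsPrimeCone (P : Set A) : Prop :=
  (∀ a : A, a * a ∈ P) ∧ (∀ a ∈ P, ∀ b ∈ P, madd a b ⊆ P) ∧
  (∀ a ∈ P, ∀ b ∈ P, a * b ∈ P) ∧ (∀ a : A, a ∈ P ∨ -a ∈ P) ∧
  IsPrimeIdeal {x : A | x ∈ P ∧ -x ∈ P}

open Classical in
/-- the map `σ_P : A → 3` associated to a prime cone `P` -/
noncomputable def sigmaOf (P : Set A) (a : A) : SignType :=
  if a ∈ P ∧ -a ∈ P then 0 else if a ∈ P then 1 else -1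

/-- `ΣA²`: the set of elements lying in some finite sum of squares -/
def SumsOfSquares (A : Type u) [Multiring A] : Set A :=
  {x : A | ∃ l : List A, l ≠ [] ∧ x ∈ listSum (l.map fun a => a * a)}

/-- a multiring is semi-real when `-1 ∉ ΣA²` -/
def IsSemiReal (A : Type u) [Multiring A] : Prop := (-(1 : A)) ∉ SumsOfSquares A

/-- a real reduced multiring -/
def IsRealReduced (A : Type u) [Multiring A] : Prop :=
  IsSemiReal A ∧ (∀ a : A, a * a * a = a) ∧
  (∀ a b : A, madd a (a * b * b) = {a}) ∧
  (∀ a b : A, ∃ c : A, madd (a * a) (b * b) = {c})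

/-- a hyperfield: a hyperring with `1 ≠ 0` and all nonzero elements invertible -/
def IsHyperfield (A : Type u) [Multiring A] : Prop :=
  IsHyperring A ∧ (1 : A) ≠ 0 ∧ ∀ a : A, a ≠ 0 → ∃ b : A, a * b = 1

/-- a morphism of multirings -/
def IsMorphism {B : Type v} [Multiring B] (f : A → B) : Prop :=
  (∀ a b c : A, a ∈ madd b c → f a ∈ madd (f b) (f c)) ∧
  (∀ a b : A, f (a * b) = f a * f b) ∧
  (∀ a : A, f (-a) = -(f a)) ∧ f 0 = 0 ∧ f 1 = 1

/-- the radical `√α = {x : xⁿ ∈ α for some n ≥ 1}` of an ideal -/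
def radical (α : Set A) : Set A := {x : A | ∃ n : ℕ, 1 ≤ n ∧ x ^ n ∈ α}

/-- the ideal `(x) = ∪ {t₁x + ⋯ + tₙx}` generated by `x` -/
def genIdeal (x : A) : Set A :=
  {y : A | ∃ l : List A, l ≠ [] ∧ y ∈ listSum (l.map fun t => t * x)}

/-- `S_a = {x : aⁿ ∈ (x) for some n ≥ 0}` -/
def Sgen (a : A) : Set A := {x : A | ∃ n : ℕ, a ^ n ∈ genIdeal x}

/-- `a` is weak-invertible when `1 ∈ ab₁ + ⋯ + abₙ` for some `b₁,…,bₙ` -/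
def WeakInvertible (a : A) : Prop :=
  ∃ l : List A, l ≠ [] ∧ (1 : A) ∈ listSum (l.map fun b => a * b)

/-- the prime spectrum of a multiring -/
abbrev Spec (A : Type u) [Multiring A] : Type u := {p : Set A // IsPrimeIdeal p}

/-- the spectral topology on `spec A`, generated by the sets `D(a) = {p : a ∉ p}` -/
instance : TopologicalSpace (Spec A) :=
  TopologicalSpace.generateFrom {U : Set (Spec A) | ∃ a : A, U = {p : Spec A | a ∉ p.1}}

/-- the Marshall quotient `A/ₘS` is a real reduced multiring (expressed on
representatives) -/
def QuotIsRealReduced (S : Set A) : Prop :=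
  (∀ l : List A, l ≠ [] → (-(1 : A)) ∉ qlistSumM S (l.map fun a => a * a)) ∧
  (∀ a : A, simM S (a * a * a) a) ∧
  (∀ a b x : A, qmemM S x a (a * b * b) ↔ simM S x a) ∧
  (∀ a b : A, ∃ c : A, ∀ x : A, qmemM S x (a * a) (b * b) ↔ simM S x c)

/-- the Marshall quotient `A/ₘS` is a geometric von Neumann hyperring
(expressed on representatives): it is a hyperring, von Neumann regular, and
`e + eᶜ = {1}` for every idempotent `e` -/
def QuotGeometricVN (S : Set A) : Prop :=
  (∀ x b c d : A, qmemM S x (b * d) (c * d) → ∃ a : A, qmemM S a b c ∧ simM S x (a * d)) ∧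
  (∀ a : A, ∃ b : A, simM S a (a * a * b)) ∧
  (∀ e x : A, simM S (e * e) e → qmemM S x 1 (-e) → simM S (e * x) 0 →
    ∀ y : A, qmemM S y e x ↔ simM S y 1)

/-- a von Neumann subgroup: a multiplicative set such that for every idempotent
`a` (with complement `aᶜ`) and every `x ∈ D_S(a, aᶜ)` there is `s ∈ S` with `xs ∈ S` -/
def IsVNSubgroup (S : Set A) : Prop :=
  IsMultiplicative S ∧
    ∀ a x ac : A, a * a = a → ac ∈ madd 1 (-a) → a * ac = 0 →
      (∃ u ∈ S, ∃ v ∈ S, ∃ w ∈ S, x * u ∈ madd (a * v) (ac * w)) →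
      ∃ s ∈ S, x * s ∈ S

/-- a preorder of a multiring -/
def IsPreorderSet (T : Set A) : Prop :=
  (∀ a : A, a * a ∈ T) ∧ (∀ a ∈ T, ∀ b ∈ T, a * b ∈ T) ∧ (∀ a ∈ T, ∀ b ∈ T, madd a b ⊆ T)

/-- `1 + T = ∪ {1 + t : t ∈ T}` -/
def oneAdd (T : Set A) : Set A := {x : A | ∃ t ∈ T, x ∈ madd 1 t}

/-- `ΣḞ²`: elements lying in some finite sum of squares of nonzero elements -/
def sumSqNonzero (A : Type u) [Multiring A] : Set A :=
  {x : A | ∃ l : List A, l ≠ [] ∧ (∀ a ∈ l, a ≠ 0) ∧ x ∈ listSum (l.map fun a => a * a)}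

end Multiring

/-!
If `z` is a complement of `d`, then `e = d²` and `z` are orthogonal idempotents with
`1 ∈ e + z`, and the absorption law `q + qb² = {q}` forces `qe + qz = {q}` for every `q`.
Given `x ∈ bd + cd`, one gets `xz = 0` and `x = xe`; choosing `v ∈ bz + cz` and
`a ∈ xd + v` gives `ad = x`, and regrouping `(be + ce) + (bz + cz)` as
`(be + bz) + (ce + cz) = b + c` shows `a ∈ b + c`.
Conversely, in a hyperring `0 ∈ e·e + (-1)·e` for `e = a²`, so `0 = se` for some
`s ∈ e + (-1)`, and `-s` is a complement of `a`.
-/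

namespace Multiring

variable {A : Type u} [Multiring A]

theorem mem_madd_zero_left (a b : A) : a ∈ madd 0 b ↔ a = b := by
  rw [madd_comm]
  exact mem_madd_zero a b

theorem zero_mul' (a : A) : 0 * a = 0 := by
  rw [mul_comm, mul_zero']

theorem zero_mem_madd_neg (a : A) : (0 : A) ∈ madd a (-a) := by
  have h := madd_rev_left a a 0 ((mem_madd_zero a a).2 rfl)
  rwa [madd_comm] at h

protected theorem neg_neg (a : A) : -(-a) = a := by
  have h := madd_rev_right 0 a (-a) (zero_mem_madd_neg a)
  exact ((mem_madd_zero_left a (-(-a))).1 h).symm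

protected theorem neg_zero : -(0 : A) = 0 :=
  ((mem_madd_zero (0 : A) (-0)).1 (madd_rev_left 0 0 0 ((mem_madd_zero 0 0).2 rfl))).symm

protected theorem neg_mul (a b : A) : -a * b = -(a * b) := by
  have h := madd_mul 0 a (-a) b (zero_mem_madd_neg a)
  rw [zero_mul'] at h
  exact (mem_madd_zero _ _).1 (madd_rev_left 0 (a * b) (-a * b) h)

theorem neg_mem_madd_neg {a b c : A} (h : a ∈ madd b c) : -a ∈ madd (-b) (-c) := by
  have h' := madd_rev_right (-c) (-a) b (madd_rev_left b a (-c) (madd_rev_right a b c h))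
  rwa [madd_comm] at h'

theorem one_mem_madd_of_mem_one_madd_neg {e z : A} (hz : z ∈ madd 1 (-e)) :
    (1 : A) ∈ madd e z := by
  have h := madd_rev_right z 1 (-e) hz
  rwa [Multiring.neg_neg, madd_comm] at h

theorem mul_self_eq_of_mem_one_madd_neg {e z : A} (hz : z ∈ madd 1 (-e)) (hez : e * z = 0) :
    z * z = z := by
  have h := madd_mul z 1 (-e) z hz
  rwa [one_mul, Multiring.neg_mul, hez, Multiring.neg_zero, mem_madd_zero] at h

theorem madd_assoc_symm {a b c h x : A} (hh : h ∈ madd b c) (hx : x ∈ madd a h) :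
    ∃ g ∈ madd a b, x ∈ madd g c := by
  rw [madd_comm] at hh hx
  obtain ⟨g, hg, hxg⟩ := madd_assoc c b a h x hh hx
  exact ⟨g, by rwa [madd_comm], by rwa [madd_comm]⟩

theorem madd_madd_madd_comm {a b c d w v x : A} (hw : w ∈ madd a b) (hv : v ∈ madd c d)
    (hx : x ∈ madd w v) : ∃ g ∈ madd a c, ∃ h ∈ madd b d, x ∈ madd g h := by
  obtain ⟨k, hk, hxk⟩ := madd_assoc a b v w x hw hx
  rw [madd_comm] at hk
  obtain ⟨h, hh, hkh⟩ := madd_assoc c d b v k hv hk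
  obtain ⟨g, hg, hxg⟩ := madd_assoc_symm hkh hxk
  exact ⟨g, hg, h, by rwa [madd_comm], hxg⟩

section Complement

variable {e z : A}

theorem eq_of_mem_madd_mul_mul (he : ∀ q : A, madd q (q * e) = {q})
    (hz : ∀ q : A, madd q (q * z) = {q}) (hee : e * e = e) (hzz : z * z = z)
    (hez : e * z = 0) (h1 : (1 : A) ∈ madd e z) {q t : A} (ht : t ∈ madd (q * e) (q * z)) :
    t = q := by
  have hte : t * e = q * e := by
    have h := madd_mul t (q * e) (q * z) e ht
    rwa [mul_assoc, hee, mul_assoc, mul_comm z, hez, mul_zero', mem_madd_zero] at h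
  have htz : t * z = q * z := by
    have h := madd_mul t (q * e) (q * z) z ht
    rwa [mul_assoc, hez, mul_zero', mul_assoc, hzz, mem_madd_zero_left] at h
  have hq : q ∈ madd (q * e) (q * z) := by
    have h := madd_mul 1 e z q h1
    rwa [one_mul, mul_comm e, mul_comm z] at h
  have key : ∀ {p r y : A}, p ∈ madd (r * e) (r * z) → y ∈ madd p r → y = r := by
    intro p r y hp hy
    obtain ⟨h, hh, hyh⟩ := madd_assoc _ _ _ p y hp hy
    rw [madd_comm, hz, Set.mem_singleton_iff] at hh
    rw [hh, madd_comm, he] at hyh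
    exact hyh
  obtain ⟨y, hy⟩ := madd_nonempty t q
  have hyt : y = t := key (by rwa [hte, htz]) (by rwa [madd_comm])
  exact hyt ▸ key ht hy

theorem exists_mem_madd_eq_mul_of_complement (he : ∀ q : A, madd q (q * e) = {q})
    (hz : ∀ q : A, madd q (q * z) = {q}) (hee : e * e = e) (hzz : z * z = z)
    (hez : e * z = 0) (h1 : (1 : A) ∈ madd e z) {b c d x : A} (hde : d * d = e)
    (hdz : d * z = 0) (hx : x ∈ madd (b * d) (c * d)) : ∃ a ∈ madd b c, x = a * d := by
  have hxz : x * z = 0 := by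
    have h := madd_mul x (b * d) (c * d) z hx
    rwa [mul_assoc, hdz, mul_zero', mul_assoc, hdz, mul_zero', mem_madd_zero] at h
  have hxe : x * e = x := by
    have h := madd_mul 1 e z x h1
    rwa [one_mul, mul_comm e, mul_comm z, hxz, mem_madd_zero, eq_comm] at h
  have hxd : x * d ∈ madd (b * e) (c * e) := by
    have h := madd_mul x (b * d) (c * d) d hx
    rwa [mul_assoc, hde, mul_assoc, hde] at h
  obtain ⟨v, hv⟩ := madd_nonempty (b * z) (c * z)
  have hvd : v * d = 0 := by
    have h := madd_mul v (b * z) (c * z) d hv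
    rwa [mul_assoc, mul_comm z, hdz, mul_zero', mul_assoc, mul_comm z, hdz, mul_zero',
      mem_madd_zero] at h
  obtain ⟨a, ha⟩ := madd_nonempty (x * d) v
  refine ⟨a, ?_, ?_⟩
  · obtain ⟨b', hb', c', hc', ha'⟩ := madd_madd_madd_comm hxd hv ha
    rwa [eq_of_mem_madd_mul_mul he hz hee hzz hez h1 hb',
      eq_of_mem_madd_mul_mul he hz hee hzz hez h1 hc'] at ha'
  · have h := madd_mul a (x * d) v d ha
    rw [hvd, mul_assoc, hde, hxe, mem_madd_zero] at h
    exact h.symm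

end Complement

theorem isHyperring_of_forall_complement (hcube : ∀ a : A, a * a * a = a)
    (habs : ∀ a b : A, madd a (a * b * b) = {a})
    (hcompl : ∀ a : A, ∃ x : A, a * x = 0 ∧ x ∈ madd 1 (-(a * a))) : IsHyperring A := by
  intro x b c d hx
  obtain ⟨z, hdz, hz⟩ := hcompl d
  have hez : d * d * z = 0 := by rw [mul_assoc, hdz, mul_zero']
  have hzz : z * z = z := mul_self_eq_of_mem_one_madd_neg hz hez
  refine exists_mem_madd_eq_mul_of_complement (fun q => ?_) (fun q => ?_) ?_ hzz hez
    (one_mem_madd_of_mem_one_madd_neg hz) rfl hdz hx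
  · rw [← mul_assoc]
    exact habs q d
  · rw [← hzz, ← mul_assoc]
    exact habs q z
  · rw [← mul_assoc, hcube]

theorem IsHyperring.exists_complement (hhyper : IsHyperring A) {e : A} (hee : e * e = e) :
    ∃ x : A, e * x = 0 ∧ x ∈ madd 1 (-e) := by
  have h0 : (0 : A) ∈ madd (e * e) (-1 * e) := by
    rw [hee, Multiring.neg_mul, one_mul]
    exact zero_mem_madd_neg e
  obtain ⟨s, hs, hs0⟩ := hhyper 0 e (-1) e h0
  refine ⟨-s, ?_, ?_⟩
  · rw [mul_comm, Multiring.neg_mul, ← hs0, Multiring.neg_zero]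
  · have h := neg_mem_madd_neg hs
    rwa [Multiring.neg_neg, madd_comm] at h

end Multiring

/-- A multiring is a real reduced multiring with complements (for each `a`
there is `x` with `ax = 0` and `x ∈ 1 + (-a²)`) iff it is a hyperring which is
a real reduced multiring. -/
theorem realReduced_with_complements_iff_hyperring {A : Type u} [Multiring A] :
    (Multiring.IsRealReduced A ∧
      ∀ a : A, ∃ x : A, a * x = 0 ∧ x ∈ Multiring.madd 1 (-(a * a))) ↔
    (Multiring.IsHyperring A ∧ Multiring.IsRealReduced A) := by
  constructor
  · rintro ⟨hr, hcompl⟩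
    exact ⟨Multiring.isHyperring_of_forall_complement hr.2.1 hr.2.2.1 hcompl, hr⟩
  · rintro ⟨hhyper, hr⟩
    refine ⟨hr, fun a => ?_⟩
    have hcube := hr.2.1
    obtain ⟨x, hx0, hx⟩ := hhyper.exists_complement (e := a * a) (by rw [← mul_assoc, hcube])
    refine ⟨x, ?_, hx⟩
    calc a * x = a * (a * a * x) := by rw [← mul_assoc, ← mul_assoc, hcube]
      _ = 0 := by rw [hx0, Multiring.mul_zero']
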